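/- Let r : ℝ → ℝ be bounded, continuously differentiable, strictly increasing with r'(s) > 0 for all s ≥ 0 and s·r(s) ≥ 0 for all s, let κ, κ_L, L, b > 0, let c₀ ≥ 0, let c solve κ·c'' = r(c), c(0) = c₀, c'(0) = 0 on [0,∞), and let w solve κ·w'' = r'(c)·w, w(0) = 1, w'(0) = 0 on [0,∞). Define M(z) := (L·b/κ_L + c'(z))·w'(z) − ((r(c(z)) − b)/κ)·w(z). Then M is strictly increasing on [0,∞); in particular, if r(c₀) ≤ b then M(z) > M(0) ≥ 0 for all z > 0. -/

import Mathlib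

/-!
Differentiating, `M' = (b w' + (L b / κL) r'(c) w) / κ`, using both equations. Since `r` is
increasing, `r' ≥ 0`, so `(w w')' = w'² + r'(c) w² / κ ≥ 0`; hence `w w' ≥ 0`, `w²` is increasing,
and by continuity `w ≥ 1`. Then `w'' ≥ 0` with `w''(0) = r'(c₀) / κ > 0`, so `w' > 0` on `(0, ∞)`
and `M' > 0` there.
-/

open Set MeasureTheory intervalIntegral Filter

/-- `c` (with derivative `c'` and second derivative `c''`) solves the initial value
problem `κ·c'' = r(c)` on `[0,∞)` with `c(0) = c₀`, `c'(0) = 0`. -/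
def SolvesIVP (κ : ℝ) (r : ℝ → ℝ) (c₀ : ℝ) (c c' c'' : ℝ → ℝ) : Prop :=
  (∀ z ∈ Ici (0:ℝ), HasDerivWithinAt c (c' z) (Ici (0:ℝ)) z) ∧
  (∀ z ∈ Ici (0:ℝ), HasDerivWithinAt c' (c'' z) (Ici (0:ℝ)) z) ∧
  ContinuousOn c'' (Ici (0:ℝ)) ∧
  (∀ z ∈ Ici (0:ℝ), κ * c'' z = r (c z)) ∧
  c 0 = c₀ ∧ c' 0 = 0

section Ici

variable {f f' : ℝ → ℝ} {a : ℝ}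

theorem monotoneOn_Ici_of_hasDerivWithinAt_nonneg
    (hf : ∀ x ∈ Ici a, HasDerivWithinAt f (f' x) (Ici a) x) (hf' : ∀ x ∈ Ioi a, 0 ≤ f' x) :
    MonotoneOn f (Ici a) :=
  monotoneOn_of_hasDerivWithinAt_nonneg (convex_Ici a)
    (fun x hx => (hf x hx).continuousWithinAt)
    (fun x hx => (hf x (interior_subset hx)).mono interior_subset)
    (fun x hx => hf' x (by rwa [interior_Ici] at hx))

theorem strictMonoOn_Ici_of_hasDerivWithinAt_pos
    (hf : ∀ x ∈ Ici a, HasDerivWithinAt f (f' x) (Ici a) x) (hf' : ∀ x ∈ Ioi a, 0 < f' x) :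
    StrictMonoOn f (Ici a) :=
  strictMonoOn_of_hasDerivWithinAt_pos (convex_Ici a)
    (fun x hx => (hf x hx).continuousWithinAt)
    (fun x hx => (hf x (interior_subset hx)).mono interior_subset)
    (fun x hx => hf' x (by rwa [interior_Ici] at hx))

theorem MonotoneOn.lt_of_hasDerivWithinAt_Ici_pos (hmono : MonotoneOn f (Ici a)) {d : ℝ}
    (hfa : HasDerivWithinAt f d (Ici a) a) (hd : 0 < d) {z : ℝ} (hz : a < z) : f a < f z := by
  rw [hasDerivWithinAt_iff_tendsto_slope, Ici_sdiff_left] at hfa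
  obtain ⟨y, hslope, hy⟩ :=
    ((hfa.eventually (lt_mem_nhds hd)).and (Ioc_mem_nhdsGT hz)).exists
  have hfy : f a < f y := (slope_pos_iff hy.1).1 hslope
  exact hfy.trans_le (hmono (mem_Ici.2 hy.1.le) (mem_Ici.2 hz.le) hy.2)

end Ici

section NonnegativePotential

variable {w w' w'' : ℝ → ℝ} {a : ℝ}
  (hw : ∀ z ∈ Ici a, HasDerivWithinAt w (w' z) (Ici a) z)
  (hw' : ∀ z ∈ Ici a, HasDerivWithinAt w' (w'' z) (Ici a) z)

section
variable (hww'' : ∀ z ∈ Ici a, 0 ≤ w z * w'' z)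
include hw hw' hww''

theorem mul_deriv_nonneg_of_mul_deriv2_nonneg (ha : 0 ≤ w a * w' a) :
    ∀ z ∈ Ici a, 0 ≤ w z * w' z := by
  have hmono : MonotoneOn (fun z => w z * w' z) (Ici a) :=
    monotoneOn_Ici_of_hasDerivWithinAt_nonneg (fun z hz => (hw z hz).mul (hw' z hz))
      (fun z hz => add_nonneg (mul_self_nonneg _) (hww'' z (mem_Ici_of_Ioi hz)))
  exact fun z hz => ha.trans (hmono self_mem_Ici hz hz)

theorem le_of_mul_deriv2_nonneg (ha : 0 < w a) (ha' : 0 ≤ w' a) :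
    ∀ z ∈ Ici a, w a ≤ w z := by
  have hww' := mul_deriv_nonneg_of_mul_deriv2_nonneg hw hw' hww'' (mul_nonneg ha.le ha')
  have hsq : MonotoneOn (fun z => w z ^ 2) (Ici a) :=
    monotoneOn_Ici_of_hasDerivWithinAt_nonneg (fun z hz => (hw z hz).pow 2)
      (fun z hz => by simpa [mul_assoc] using hww' z (mem_Ici_of_Ioi hz))
  intro z hz
  have hsqz : w a ^ 2 ≤ w z ^ 2 := hsq self_mem_Ici hz hz
  -- `w` cannot change sign without vanishing, which `w z ^ 2 ≥ w a ^ 2 > 0` forbids.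
  have hwz : 0 ≤ w z := by
    by_contra! hneg
    obtain ⟨t, ht, hwt⟩ := isPreconnected_Ici.intermediate_value hz self_mem_Ici
      (fun x hx => (hw x hx).continuousWithinAt) ⟨hneg.le, ha.le⟩
    have := hsq self_mem_Ici ht ht
    simp only [hwt] at this
    nlinarith
  exact (pow_le_pow_iff_left₀ ha.le hwz two_ne_zero).1 hsqz

end

variable {κ : ℝ} {q : ℝ → ℝ} (hκ : 0 < κ) (hq : ∀ z ∈ Ici a, 0 ≤ q z)
  (hode : ∀ z ∈ Ici a, κ * w'' z = q z * w z) (hwa : 0 < w a) (hw'a : 0 ≤ w' a)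
include hw hw' hκ hq hode hwa hw'a

theorem pos_of_deriv2_eq_mul : ∀ z ∈ Ici a, 0 < w z := by
  refine fun z hz => hwa.trans_le (le_of_mul_deriv2_nonneg hw hw' (fun x hx => ?_) hwa hw'a z hz)
  refine nonneg_of_mul_nonneg_right ?_ hκ
  rw [mul_left_comm, hode x hx, mul_left_comm]
  exact mul_nonneg (hq x hx) (mul_self_nonneg _)

theorem deriv_pos_of_deriv2_eq_mul (hqa : 0 < q a) : ∀ z ∈ Ioi a, 0 < w' z := by
  have hw''_nonneg : ∀ z ∈ Ici a, 0 ≤ w'' z := fun z hz =>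
    nonneg_of_mul_nonneg_right (hode z hz ▸ mul_nonneg (hq z hz)
      (pos_of_deriv2_eq_mul hw hw' hκ hq hode hwa hw'a z hz).le) hκ
  have hw''a : 0 < w'' a := pos_of_mul_pos_right (hode a self_mem_Ici ▸ mul_pos hqa hwa) hκ.le
  have hmono : MonotoneOn w' (Ici a) := monotoneOn_Ici_of_hasDerivWithinAt_nonneg hw'
    fun x hx => hw''_nonneg x (mem_Ici_of_Ioi hx)
  exact fun z hz =>
    hw'a.trans_lt (hmono.lt_of_hasDerivWithinAt_Ici_pos (hw' a self_mem_Ici) hw''a hz)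

end NonnegativePotential

theorem hasDerivWithinAt_flux {κ A b : ℝ} (hκ : κ ≠ 0) {r : ℝ → ℝ}
    {c c' c'' w w' w'' : ℝ → ℝ} {s : Set ℝ} {z : ℝ} (hr : DifferentiableAt ℝ r (c z))
    (hc : HasDerivWithinAt c (c' z) s z) (hc' : HasDerivWithinAt c' (c'' z) s z)
    (hcode : κ * c'' z = r (c z))
    (hw : HasDerivWithinAt w (w' z) s z) (hw' : HasDerivWithinAt w' (w'' z) s z)
    (hwode : κ * w'' z = deriv r (c z) * w z) :
    HasDerivWithinAt (fun z => (A + c' z) * w' z - ((r (c z) - b) / κ) * w z)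
      ((b * w' z + A * (deriv r (c z) * w z)) / κ) s z := by
  have hrc : HasDerivWithinAt (fun z => r (c z)) (deriv r (c z) * c' z) s z :=
    hr.hasDerivAt.comp_hasDerivWithinAt z hc
  refine (((hc'.const_add A).mul hw').sub (((hrc.sub_const b).div_const κ).mul hw)).congr_deriv ?_
  rw [eq_div_iff hκ]
  field_simp
  linear_combination w' z * hcode + (A + c' z) * hwode

theorem M_strictly_increasing_general
    (κ κL L b : ℝ) (hκ : 0 < κ) (hκL : 0 < κL) (hL : 0 < L) (hb : 0 < b)
    (r : ℝ → ℝ)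
    (hr : ContDiff ℝ 1 r) (hrmono : StrictMono r)
    (hr'pos : ∀ s : ℝ, 0 ≤ s → 0 < deriv r s)
    (c₀ : ℝ) (hc₀ : 0 ≤ c₀)
    (c c' c'' : ℝ → ℝ) (hc : SolvesIVP κ r c₀ c c' c'')
    (w w' w'' : ℝ → ℝ)
    (hw1 : ∀ z ∈ Ici (0:ℝ), HasDerivWithinAt w (w' z) (Ici (0:ℝ)) z)
    (hw2 : ∀ z ∈ Ici (0:ℝ), HasDerivWithinAt w' (w'' z) (Ici (0:ℝ)) z)
    (hwode : ∀ z ∈ Ici (0:ℝ), κ * w'' z = deriv r (c z) * w z)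
    (hw0 : w 0 = 1) (hw0' : w' 0 = 0)
    (M : ℝ → ℝ)
    (hM : ∀ z : ℝ, M z = (L * b / κL + c' z) * w' z - ((r (c z) - b) / κ) * w z) :
    StrictMonoOn M (Ici (0:ℝ)) ∧
    (r c₀ ≤ b → 0 ≤ M 0 ∧ ∀ z > (0:ℝ), M 0 < M z) := by
  obtain ⟨hc1, hc2, -, hcode, hcini, hcini'⟩ := hc
  have hr' : ∀ z ∈ Ici (0:ℝ), 0 ≤ deriv r (c z) := fun _ _ => hrmono.monotone.deriv_nonneg
  have hw_pos := pos_of_deriv2_eq_mul hw1 hw2 hκ hr' hwode (hw0 ▸ one_pos) hw0'.ge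
  have hw'_pos := deriv_pos_of_deriv2_eq_mul hw1 hw2 hκ hr' hwode (hw0 ▸ one_pos) hw0'.ge
    (hcini ▸ hr'pos c₀ hc₀)
  have hM' : ∀ z ∈ Ici (0:ℝ), HasDerivWithinAt M
      ((b * w' z + L * b / κL * (deriv r (c z) * w z)) / κ) (Ici 0) z := fun z hz => by
    rw [show M = _ from funext hM]
    exact hasDerivWithinAt_flux hκ.ne' (hr.differentiable one_ne_zero _) (hc1 z hz) (hc2 z hz)
      (hcode z hz) (hw1 z hz) (hw2 z hz) (hwode z hz)
  have hMmono : StrictMonoOn M (Ici (0:ℝ)) := by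
    refine strictMonoOn_Ici_of_hasDerivWithinAt_pos hM' fun z hz => ?_
    have := hw_pos z (mem_Ici_of_Ioi hz)
    have := hw'_pos z hz
    have := hr' z (mem_Ici_of_Ioi hz)
    positivity
  have hM0 : M 0 = (b - r c₀) / κ := by
    rw [hM, hw0, hw0', hcini', hcini]
    ring
  exact ⟨hMmono, fun hrc₀ => ⟨hM0 ▸ div_nonneg (sub_nonneg.2 hrc₀) hκ.le,
    fun z hz => hMmono self_mem_Ici hz.le hz⟩⟩

theorem M_strictly_increasing
    (κ κL L b : ℝ) (hκ : 0 < κ) (hκL : 0 < κL) (hL : 0 < L) (hb : 0 < b)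
    (r : ℝ → ℝ) (hrb : ∃ B : ℝ, ∀ s : ℝ, |r s| ≤ B)
    (hr : ContDiff ℝ 1 r) (hrmono : StrictMono r)
    (hr'pos : ∀ s : ℝ, 0 ≤ s → 0 < deriv r s)
    (hrsign : ∀ s : ℝ, 0 ≤ s * r s)
    (c₀ : ℝ) (hc₀ : 0 ≤ c₀)
    (c c' c'' : ℝ → ℝ) (hc : SolvesIVP κ r c₀ c c' c'')
    (w w' w'' : ℝ → ℝ)
    (hw1 : ∀ z ∈ Ici (0:ℝ), HasDerivWithinAt w (w' z) (Ici (0:ℝ)) z)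
    (hw2 : ∀ z ∈ Ici (0:ℝ), HasDerivWithinAt w' (w'' z) (Ici (0:ℝ)) z)
    (hw2c : ContinuousOn w'' (Ici (0:ℝ)))
    (hwode : ∀ z ∈ Ici (0:ℝ), κ * w'' z = deriv r (c z) * w z)
    (hw0 : w 0 = 1) (hw0' : w' 0 = 0)
    (M : ℝ → ℝ)
    (hM : ∀ z : ℝ, M z = (L * b / κL + c' z) * w' z - ((r (c z) - b) / κ) * w z) :
    StrictMonoOn M (Ici (0:ℝ)) ∧
    (r c₀ ≤ b → 0 ≤ M 0 ∧ ∀ z > (0:ℝ), M 0 < M z) :=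
  M_strictly_increasing_general κ κL L b hκ hκL hL hb r hr hrmono hr'pos c₀ hc₀ c c' c'' hc w w' w''
    hw1 hw2 hwode hw0 hw0' M hM
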